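/- Assume the oracle tokenizer satisfies Exclusivity (no prefix or suffix of a multi-character call/return token can occur as an infix of a string of that token). Then for any nesting pattern uxzyv of the oracle language, there exists a call-return token pair (h_a, h_b) such that some string s_a ∈ h_a occurs as a substring of x^2 (the concatenation of two copies of x) and some string s_b ∈ h_b occurs as a substring of y^2. -/
import Mathlib


namespace VStar

inductive Kind : Type
  | plain | call | ret
deriving DecidableEq

variable {α : Type}

/-- Well-matched strings with respect to a tagging. -/
inductive WellMatched (t : α → Kind) : List α → Prop
  | nil : WellMatched t []
  | plain {c : α} {s : List α} : t c = Kind.plain → WellMatched t s →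
      WellMatched t (c :: s)
  | nest {a b : α} {s1 s2 : List α} : t a = Kind.call → t b = Kind.ret →
      WellMatched t s1 → WellMatched t s2 →
      WellMatched t (a :: s1 ++ b :: s2)

/-- Well-matched visibly pushdown grammars. -/
structure VPG (α N : Type) (t : α → Kind) where
  start : N
  peps : N → Prop
  pplain : N → α → N → Prop
  pmatch : N → α → N → α → N → Prop
  plain_ok : ∀ {L c L1}, pplain L c L1 → t c = Kind.plain
  match_ok : ∀ {L a L1 b L2}, pmatch L a L1 b L2 → t a = Kind.call ∧ t b = Kind.ret

inductive VPG.Derives {α N : Type} {t : α → Kind} (G : VPG α N t) : N → List α → Prop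
  | eps {L} : G.peps L → G.Derives L []
  | plain {L c L1 s} : G.pplain L c L1 → G.Derives L1 s → G.Derives L (c :: s)
  | nest {L a L1 b L2 s1 s2} : G.pmatch L a L1 b L2 →
      G.Derives L1 s1 → G.Derives L2 s2 → G.Derives L (a :: s1 ++ b :: s2)

def VPG.lang {α N : Type} {t : α → Kind} (G : VPG α N t) : Set (List α) :=
  {s | G.Derives G.start s}

/-- A language is a visibly pushdown language (for tagging `t`). -/
def IsVPL (t : α → Kind) (L : Set (List α)) : Prop :=
  ∃ (n : ℕ) (G : VPG α (Fin n) t), L = G.lang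

/-- `lpow x k` is the concatenation of `k` copies of `x`. -/
def lpow (x : List α) (k : ℕ) : List α := (List.replicate k x).flatten

/-- A nesting pattern of `s = u ++ x ++ z ++ y ++ v` with respect to language `L`. -/
def NestingPattern (L : Set (List α)) (u x z y v : List α) : Prop :=
  x ≠ [] ∧ y ≠ [] ∧
    (∀ k, 1 ≤ k → u ++ lpow x k ++ z ++ lpow y k ++ v ∈ L) ∧
    (∀ k j, k ≠ j → u ++ lpow x k ++ z ++ lpow y j ++ v ∉ L)

/-- `x` contains an occurrence of a call symbol with no matching return inside `x`. -/
def UnmatchedCallIn (t : α → Kind) (x : List α) : Prop :=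
  ∃ x1 a x2, x = x1 ++ a :: x2 ∧ t a = Kind.call ∧
    ¬ ∃ w b w', x2 = w ++ b :: w' ∧ t b = Kind.ret ∧ WellMatched t w

/-- `y` contains an occurrence of a return symbol with no matching call inside `y`. -/
def UnmatchedRetIn (t : α → Kind) (y : List α) : Prop :=
  ∃ y1 b y2, y = y1 ++ b :: y2 ∧ t b = Kind.ret ∧
    ¬ ∃ w a w', y1 = w ++ a :: w' ∧ t a = Kind.call ∧ WellMatched t w'

/-- A tagging is compatible with a nesting pattern `(x, y)`. -/
def PatternCompatible (t : α → Kind) (x y : List α) : Prop :=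
  UnmatchedCallIn t x ∧ UnmatchedRetIn t y

/-- Compatibility of a tagging with a set `S` of seed strings (patterns w.r.t. `L`). -/
def CompatibleWith (t : α → Kind) (L S : Set (List α)) : Prop :=
  (∀ s ∈ S, WellMatched t s) ∧
  ∀ u x z y v, (u ++ x ++ z ++ y ++ v) ∈ S → NestingPattern L u x z y v →
    PatternCompatible t x y

/-- Compatibility of a tagging with the whole language. -/
def Compatible (t : α → Kind) (L : Set (List α)) : Prop := CompatibleWith t L L

/-- Syntactic congruence with respect to `L`. -/
def SynCongr (L : Set (List α)) (s1 s2 : List α) : Prop :=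
  ∀ u v, u ++ s1 ++ v ∈ L ↔ u ++ s2 ++ v ∈ L

end VStar



namespace VStar

variable {α : Type}

theorem lpow_succ (x : List α) (k : ℕ) : lpow x (k+1) = x ++ lpow x k := by
  simp [lpow, List.replicate_succ]

theorem lpow_succ' (x : List α) (k : ℕ) : lpow x (k+1) = lpow x k ++ x := by
  simp [lpow, List.replicate_succ', List.flatten_append]

theorem lpow_length (x : List α) (k : ℕ) : (lpow x k).length = k * x.length := by
  induction k with
  | zero => simp [lpow]
  | succ k ih => rw [lpow_succ]; simp [ih, Nat.succ_mul]; ring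

theorem lpow_prefix (x : List α) (k : ℕ) : x <+: lpow x (k+1) :=
  ⟨lpow x k, (lpow_succ x k).symm⟩

/-- Key combinatorial lemma: an infix of `x^k` either fits inside `x ++ x`, or
it contains a nonempty prefix of itself strictly inside. -/
theorem infix_lpow_cases (x : List α) (hx : x ≠ []) :
    ∀ k (sa : List α), sa <:+: lpow x k →
      sa <:+: (x ++ x) ∨
      ∃ a w c : List α, a ≠ [] ∧ w ≠ [] ∧ c ≠ [] ∧ w <+: sa ∧ sa = a ++ w ++ c := by
  intro k
  induction k with
  | zero =>
    intro sa h
    left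
    simp only [lpow, List.replicate, List.flatten_nil] at h
    rw [List.infix_nil] at h
    subst h
    exact List.nil_infix
  | succ k ih =>
    intro sa h
    rcases Nat.lt_or_ge k 2 with hk | hk
    · -- k+1 ≤ 2, so lpow x (k+1) is a prefix of x ++ x
      left
      have hpre : lpow x (k+1) <+: x ++ x := by
        interval_cases k
        · exact ⟨x, by simp [lpow, List.replicate]⟩
        · exact ⟨[], by simp [lpow, List.replicate]⟩
      exact h.trans hpre.isInfix
    · obtain ⟨p, q, hpq⟩ := h
      have hnpos : 0 < x.length := List.length_pos_iff.mpr hx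
      have hplen : p <+: lpow x (k+1) := ⟨sa ++ q, by rw [← List.append_assoc]; exact hpq⟩
      rcases Nat.lt_or_ge p.length x.length with hp | hp
      · rcases Nat.lt_or_ge q.length x.length with hq | hq
        · -- main case: occurrence pinned near the left, spans > 2 copies
          right
          have hpx : p <+: x :=
            List.prefix_of_prefix_length_le hplen (lpow_prefix x k) (Nat.le_of_lt hp)
          obtain ⟨x2, hx2⟩ := hpx
          subst hx2
          have hx2ne : x2 ≠ [] := by
            intro hcon
            rw [hcon] at hp
            simp at hp
          obtain ⟨k', rfl⟩ : ∃ k', k = k' + 1 := ⟨k - 1, by omega⟩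
          have heq : sa ++ q = x2 ++ p ++ x2 ++ lpow (p ++ x2) k' := by
            have h1 : p ++ (sa ++ q) = p ++ (x2 ++ p ++ x2 ++ lpow (p ++ x2) k') := by
              rw [← List.append_assoc, hpq, lpow_succ, lpow_succ]
              simp [List.append_assoc]
            exact List.append_cancel_left h1
          have hlong : (x2 ++ p ++ x2).length < sa.length := by
            have hk3 : 3 ≤ k' + 1 + 1 := by omega
            have e2 : 3 * (p ++ x2).length ≤ (k' + 1 + 1) * (p ++ x2).length :=
              Nat.mul_le_mul hk3 (Nat.le_refl _)
            have e1 := congrArg List.length hpq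
            rw [lpow_length] at e1
            generalize (k' + 1 + 1) * (p ++ x2).length = N at e1 e2
            simp only [List.length_append] at e1 e2 hp hq ⊢
            omega
          have hpre2 : (x2 ++ p ++ x2) <+: sa :=
            List.prefix_of_prefix_length_le
              ⟨lpow (p ++ x2) k', by rw [← heq]⟩ ⟨q, rfl⟩ (Nat.le_of_lt hlong)
          obtain ⟨c, hc⟩ := hpre2
          subst hc
          have hcne : c ≠ [] := by
            intro hcon
            subst hcon
            simp at hlong
          refine ⟨x2 ++ p, x2, c, ?_, hx2ne, hcne, ?_, rfl⟩
          · intro hcon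
            rw [List.append_eq_nil_iff] at hcon
            exact hx2ne hcon.1
          · exact ⟨p ++ x2 ++ c, by simp [List.append_assoc]⟩
        · -- x is a suffix of q: peel a copy of x off the right
          have hqs : x <:+ q := by
            exact List.suffix_of_suffix_length_le ⟨lpow x k, (lpow_succ' x k).symm⟩
              ⟨p ++ sa, hpq⟩ hq
          obtain ⟨q', hq'⟩ := hqs
          refine ih sa ⟨p, q', List.append_cancel_right (bs := x) ?_⟩
          rw [← lpow_succ', ← hpq, ← hq']
          simp [List.append_assoc]
      · -- x is a prefix of p: peel a copy of x off the left
        have hps : x <+: p :=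
          List.prefix_of_prefix_length_le (lpow_prefix x k) hplen hp
        obtain ⟨p', hp'⟩ := hps
        refine ih sa ⟨p', q, List.append_cancel_left (as := x) ?_⟩
        rw [← lpow_succ, ← hpq, ← hp']
        simp [List.append_assoc]

/-- If the exclusivity property holds for token `h`, any token string occurring
inside some `x^k` occurs inside `x ++ x`. -/
theorem infix_square {m : ℕ} (kind : Fin m → Kind) (tokenStr : Fin m → Set (List α))
    (hexcl : ∀ h, kind h ≠ Kind.plain → ∀ s ∈ tokenStr h, 1 < s.length →
      ∀ w : List α, w ≠ [] → (w <+: s ∨ w <:+ s) →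
        ∀ s' ∈ tokenStr h, ∀ a c : List α, a ≠ [] → c ≠ [] → s' ≠ a ++ w ++ c)
    (h : Fin m) (hh : kind h ≠ Kind.plain) (x : List α) (hx : x ≠ [])
    (k : ℕ) (sa : List α) (hsa : sa ∈ tokenStr h) (hinf : sa <:+: lpow x k) :
    sa <:+: (x ++ x) := by
  rcases infix_lpow_cases x hx k sa hinf with h1 | ⟨a, w, c, hane, hwne, hcne, hwpre, heq⟩
  · exact h1
  · exfalso
    have hlen : 1 < sa.length := by
      rw [heq]
      simp only [List.length_append]
      have := List.length_pos_iff.mpr hane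
      have := List.length_pos_iff.mpr hwne
      have := List.length_pos_iff.mpr hcne
      omega
    exact hexcl h hh sa hsa hlen w hwne (Or.inl hwpre) sa hsa a c hane hcne heq

end VStar

open VStar in
/-- under Exclusivity, for any nesting pattern `uxzyv` of the
oracle language there is a call-return token pair whose strings occur as
substrings of `x²` and `y²` respectively. -/
theorem tokens_within_square {α : Type} {m : ℕ} (kind : Fin m → Kind)
    (tokenStr : Fin m → Set (List α)) (Paired : Fin m → Fin m → Prop)
    (L : Set (List α)) (u x z y v : List α)
    (hexcl : ∀ h, kind h ≠ Kind.plain → ∀ s ∈ tokenStr h, 1 < s.length →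
      ∀ w : List α, w ≠ [] → (w <+: s ∨ w <:+ s) →
        ∀ s' ∈ tokenStr h, ∀ a c : List α, a ≠ [] → c ≠ [] → s' ≠ a ++ w ++ c)
    (hnp : NestingPattern L u x z y v)
    (hmem : u ++ x ++ z ++ y ++ v ∈ L)
    (hprev : ∃ k, 1 ≤ k ∧ ∃ ha hb, Paired ha hb ∧
      kind ha = Kind.call ∧ kind hb = Kind.ret ∧
      (∃ sa ∈ tokenStr ha, sa <:+: lpow x k) ∧
      (∃ sb ∈ tokenStr hb, sb <:+: lpow y k)) :
    ∃ ha hb, Paired ha hb ∧ kind ha = Kind.call ∧ kind hb = Kind.ret ∧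
      (∃ sa ∈ tokenStr ha, sa <:+: (x ++ x)) ∧
      (∃ sb ∈ tokenStr hb, sb <:+: (y ++ y)) := by
  obtain ⟨k, hk1, ha, hb, hpair, hca, hcb, ⟨sa, hsa, hsax⟩, ⟨sb, hsb, hsby⟩⟩ := hprev
  refine ⟨ha, hb, hpair, hca, hcb, ⟨sa, hsa, ?_⟩, ⟨sb, hsb, ?_⟩⟩
  · exact infix_square kind tokenStr hexcl ha (by rw [hca]; intro h; cases h) x hnp.1 k sa hsa hsax
  · exact infix_square kind tokenStr hexcl hb (by rw [hcb]; intro h; cases h) y hnp.2.1 k sb hsb hsby
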